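/- Forwards-in-time error decomposition of the weight component (Lemma forward-phi-error): E[φ̂_Q(Z)] = Σ_{t=1}^{T} E[ ( ∏_{s=0}^{t−1} r̂_s(A_s | H_s) )·Σ_{b∈{0,1}} ( m̂_t(b, H_t) − m_t(b, H_t) )·E(φ̂_t(b; A_t, H_t) | H_t) ] + Σ_{t=1}^{T} E[ ( ∏_{s=0}^{t−1} r̂_s(A_s | H_s) )·Σ_{b} m_t(b, H_t)·( Q̂_t(b | H_t) − Q_t(b | H_t) + E(φ̂_t(b; A_t, H_t) | H_t) ) ] + Σ_{t=1}^{T} E[ ( ∏_{s=0}^{t−1} r̂_s(A_s | H_s) )·Σ_{b} m_t(b, H_t)·( Q_t(b | H_t) − Q̂_t(b | H_t) ) ]. -/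

import Mathlib

/-!
Fix a time `t`. The weight `∏_{u<t} r̂_u` and the regression estimates `m̂_t(b, ·)` are bounded and
`H_t`-measurable, so by the pull-out property of conditional expectation
`E[∏_{u<t} r̂_u · m̂_t(b) · φ̂_t(b)] = E[∏_{u<t} r̂_u · m̂_t(b) · E(φ̂_t(b) | H_t)]`.
The three summands on the right-hand side add up pointwise to
`∏_{u<t} r̂_u · Σ_b m̂_t(b) E(φ̂_t(b) | H_t)`: the `m_t`-terms and the `Q̂_t - Q_t` terms cancel.
Every function involved is essentially bounded, which justifies splitting the integrals.
-/

open MeasureTheory ProbabilityTheory Set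

open scoped ENNReal

section CondExp

variable {Ω : Type*} {m m0 : MeasurableSpace Ω} {μ : Measure Ω}

theorem integral_mul_condExp_of_stronglyMeasurable (hm : m ≤ m0) [SigmaFinite (μ.trim hm)]
    {f g : Ω → ℝ} (hg : StronglyMeasurable[m] g) (hgf : Integrable (g * f) μ)
    (hf : Integrable f μ) : ∫ ω, g ω * (μ[f | m]) ω ∂μ = ∫ ω, g ω * f ω ∂μ :=
  calc ∫ ω, g ω * (μ[f | m]) ω ∂μ = ∫ ω, (μ[g * f | m]) ω ∂μ :=
        integral_congr_ae (condExp_mul_of_stronglyMeasurable_left hg hgf hf).symm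
    _ = ∫ ω, g ω * f ω ∂μ := integral_condExp hm

theorem ae_condExp_mem_Icc [IsFiniteMeasure μ] (hm : m ≤ m0) {f : Ω → ℝ} {a b : ℝ}
    (hf : AEStronglyMeasurable f μ) (hab : ∀ᵐ ω ∂μ, f ω ∈ Icc a b) :
    ∀ᵐ ω ∂μ, (μ[f | m]) ω ∈ Icc a b := by
  replace hf : Integrable f μ := (memLp_of_bounded hab hf 1).integrable le_rfl
  have hlow := condExp_mono (m := m) (integrable_const a) hf (hab.mono fun _ h => h.1)
  have hup := condExp_mono (m := m) hf (integrable_const b) (hab.mono fun _ h => h.2)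
  rw [condExp_const hm] at hlow hup
  filter_upwards [hlow, hup] with ω h₁ h₂ using ⟨h₁, h₂⟩

variable [IsFiniteMeasure μ] {ι : Type*} [Fintype ι]

theorem integral_sum_mul_condExp (hm : m ≤ m0) {g φ : ι → Ω → ℝ}
    (hg : ∀ i, StronglyMeasurable[m] (g i)) (hg' : ∀ i, MemLp (g i) ∞ μ)
    (hφ : ∀ i, MemLp (φ i) ∞ μ) :
    ∫ ω, ∑ i, g i ω * (μ[φ i | m]) ω ∂μ = ∫ ω, ∑ i, g i ω * φ i ω ∂μ := by
  have hint : ∀ {f : Ω → ℝ}, MemLp f ∞ μ → Integrable f μ := fun h => h.integrable le_top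
  rw [integral_finsetSum _ fun i _ => hint (((hφ i).condExp le_top).mul' (hg' i)),
    integral_finsetSum _ fun i _ => hint ((hφ i).mul' (hg' i))]
  exact Finset.sum_congr rfl fun i _ => integral_mul_condExp_of_stronglyMeasurable hm (hg i)
    (hint ((hφ i).mul (hg' i))) (hint (hφ i))

theorem integral_mul_sum_mul_decomposition (hm : m ≤ m0) {w : Ω → ℝ} {g M Q Q' φ : ι → Ω → ℝ}
    (hw : StronglyMeasurable[m] w) (hw' : MemLp w ∞ μ)
    (hg : ∀ i, StronglyMeasurable[m] (g i)) (hg' : ∀ i, MemLp (g i) ∞ μ)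
    (hM : ∀ i, MemLp (M i) ∞ μ) (hQ : ∀ i, MemLp (Q i) ∞ μ) (hQ' : ∀ i, MemLp (Q' i) ∞ μ)
    (hφ : ∀ i, MemLp (φ i) ∞ μ) :
    ∫ ω, w ω * ∑ i, g i ω * φ i ω ∂μ
      = (∫ ω, w ω * ∑ i, (g i ω - M i ω) * (μ[φ i | m]) ω ∂μ)
        + (∫ ω, w ω * ∑ i, M i ω * (Q' i ω - Q i ω + (μ[φ i | m]) ω) ∂μ)
        + ∫ ω, w ω * ∑ i, M i ω * (Q i ω - Q' i ω) ∂μ := by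
  have hint : ∀ {F : ι → Ω → ℝ}, (∀ i, MemLp (F i) ∞ μ) →
      Integrable (fun ω => w ω * ∑ i, F i ω) μ := fun hF =>
    ((memLp_finsetSum _ fun i _ => hF i).mul' hw').integrable le_top
  have he : ∀ i, MemLp (μ[φ i | m]) ∞ μ := fun i => (hφ i).condExp le_top
  have h₁ : Integrable (fun ω => w ω * ∑ i, (g i ω - M i ω) * (μ[φ i | m]) ω) μ :=
    hint fun i => (he i).mul' ((hg' i).sub (hM i))
  have h₂ : Integrable (fun ω => w ω * ∑ i, M i ω * (Q' i ω - Q i ω + (μ[φ i | m]) ω)) μ :=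
    hint fun i => (((hQ' i).sub (hQ i)).add (he i)).mul' (hM i)
  have h₃ : Integrable (fun ω => w ω * ∑ i, M i ω * (Q i ω - Q' i ω)) μ :=
    hint fun i => ((hQ i).sub (hQ' i)).mul' (hM i)
  rw [← integral_add h₁ h₂, ← integral_add (h₁.fun_add h₂) h₃]
  calc ∫ ω, w ω * ∑ i, g i ω * φ i ω ∂μ
      = ∫ ω, ∑ i, (w ω * g i ω) * φ i ω ∂μ := by simp_rw [Finset.mul_sum, mul_assoc]
    _ = ∫ ω, ∑ i, (w ω * g i ω) * (μ[φ i | m]) ω ∂μ :=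
        (integral_sum_mul_condExp hm (fun i => hw.mul (hg i)) (fun i => (hg' i).mul hw') hφ).symm
    _ = _ := by
        congr 1
        ext ω
        simp only [Finset.mul_sum, ← Finset.sum_add_distrib]
        exact Finset.sum_congr rfl fun i _ => by ring

end CondExp

section History

variable {Ω E β : Type*} [MeasurableSpace E] [MeasurableSpace β]
  (X : ℕ → Ω → E) (A : ℕ → Ω → β)

abbrev history (t : ℕ) : MeasurableSpace Ω :=
  (⨆ u ∈ Finset.range (t + 1), MeasurableSpace.comap (X u) inferInstance)
    ⊔ ⨆ u ∈ Finset.range t, MeasurableSpace.comap (A u) inferInstance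

theorem history_mono : Monotone (history X A) := fun u t hut =>
  sup_le_sup
    (biSup_mono fun v hv => Finset.mem_range.2 ((Finset.mem_range.1 hv).trans_le (by omega)))
    (biSup_mono fun v hv => Finset.mem_range.2 ((Finset.mem_range.1 hv).trans_le hut))

theorem history_le {m0 : MeasurableSpace Ω} (hX : ∀ t, Measurable (X t))
    (hA : ∀ t, Measurable (A t)) (t : ℕ) : history X A t ≤ m0 :=
  sup_le (iSup₂_le fun u _ => (hX u).comap_le) (iSup₂_le fun u _ => (hA u).comap_le)

theorem measurable_history_of_lt {u t : ℕ} (hut : u < t) : Measurable[history X A t] (A u) :=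
  Measurable.of_comap_le <| (le_iSup₂_of_le (f := fun v (_ : v ∈ Finset.range t) =>
    MeasurableSpace.comap (A v) inferInstance) u (Finset.mem_range.2 hut) le_rfl).trans le_sup_right

end History

theorem measurable_apply_of_countable {Ω ι γ : Type*} {m : MeasurableSpace Ω}
    [MeasurableSpace ι] [Countable ι] [MeasurableSingletonClass ι] [MeasurableSpace γ]
    {F : ι → Ω → γ} {g : Ω → ι} (hF : ∀ i, Measurable[m] (F i)) (hg : Measurable[m] g) :
    Measurable[m] fun ω => F (g ω) ω :=
  (measurable_from_prod_countable_left (f := fun q : Ω × ι => F q.2 q.1) hF).comp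
    (measurable_id.prodMk hg)

theorem measurable_ite_self_one_sub {Ω : Type*} {m : MeasurableSpace Ω} {π : Ω → ℝ}
    (hπ : Measurable[m] π) (b : Bool) : Measurable[m] fun ω => if b then π ω else 1 - π ω := by
  cases b <;> simp [hπ, hπ.const_sub]

theorem ite_self_one_sub_mem_Icc {x : ℝ} (hx : x ∈ Icc (0 : ℝ) 1) (b : Bool) :
    (if b then x else 1 - x) ∈ Icc (0 : ℝ) 1 := by
  cases b <;> simp only [Bool.false_eq_true, ↓reduceIte, mem_Icc] <;>
    constructor <;> linarith [hx.1, hx.2]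

section Intervention

/-- `π b ± s(π a) (1 - π a)`, with `+` exactly when `b = a`: the paper's `Q_t(b | H_t)` for
`π = P(A_t = · | H_t)`, and `Q̂_t(b | H_t)` for the estimated propensities. -/
def interventionScore (s : ℝ → ℝ) (a : Bool) (π : Bool → ℝ) (b : Bool) : ℝ :=
  π b + (if b = a then 1 else -1) * s (π a) * (1 - π a)

/-- The paper's `φ_t(b; A_t, H_t)`, with `x = A_t` and `π = P(A_t = a_t | H_t)`
(`φ̂_t` when `π` is the estimated propensity). -/
noncomputable def interventionInfluence (s : ℝ → ℝ) (a b x : Bool) (π : ℝ) : ℝ :=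
  (if b = a then 1 else -1) * ((if x = a then 1 else 0) - π) * (1 - s π + deriv s π * (1 - π))

theorem abs_ite_one_neg_one_le (P : Prop) [Decidable P] : |(if P then (1 : ℝ) else -1)| ≤ 1 := by
  split_ifs <;> simp

variable {s : ℝ → ℝ}

theorem abs_interventionScore_le (hs : ∀ x ∈ Icc (0 : ℝ) 1, s x ∈ Icc (0 : ℝ) 1)
    {a b : Bool} {π : Bool → ℝ} (hπa : π a ∈ Icc (0 : ℝ) 1) (hπb : π b ∈ Icc (0 : ℝ) 1) :
    |interventionScore s a π b| ≤ 2 := by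
  obtain ⟨hsa₀, hsa₁⟩ := hs _ hπa
  have hrest : |s (π a) * (1 - π a)| ≤ 1 := by
    rw [abs_mul, abs_of_nonneg hsa₀, abs_of_nonneg (by linarith [hπa.2])]
    nlinarith [hπa.1]
  calc |interventionScore s a π b|
      ≤ |π b| + |(if b = a then (1 : ℝ) else -1)| * |s (π a) * (1 - π a)| := by
        rw [interventionScore, mul_assoc, ← abs_mul]; exact abs_add_le _ _
    _ ≤ 1 + 1 * 1 := by
        gcongr
        · exact abs_le.2 ⟨by linarith [hπb.1], hπb.2⟩
        · exact abs_ite_one_neg_one_le _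
    _ = 2 := by norm_num

theorem abs_interventionInfluence_le (hs : ∀ x ∈ Icc (0 : ℝ) 1, s x ∈ Icc (0 : ℝ) 1) {K : ℝ}
    (hs' : ∀ x, |deriv s x| ≤ K) (a b x : Bool) {π : ℝ} (hπ : π ∈ Icc (0 : ℝ) 1) :
    |interventionInfluence s a b x π| ≤ 1 + K := by
  obtain ⟨hs₀, hs₁⟩ := hs π hπ
  have hderiv : |deriv s π * (1 - π)| ≤ K := by
    rw [abs_mul, abs_of_nonneg (by linarith [hπ.2] : (0 : ℝ) ≤ 1 - π)]
    nlinarith [hs' π, abs_nonneg (deriv s π), hπ.1]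
  have hdiff : |(if x = a then (1 : ℝ) else 0) - π| ≤ 1 := by
    split_ifs <;> exact abs_le.2 ⟨by linarith [hπ.1, hπ.2], by linarith [hπ.1, hπ.2]⟩
  have hlast : |1 - s π + deriv s π * (1 - π)| ≤ 1 + K :=
    (abs_add_le _ _).trans (add_le_add (abs_le.2 ⟨by linarith, by linarith⟩) hderiv)
  calc |interventionInfluence s a b x π|
      = |(if b = a then (1 : ℝ) else -1)| * |(if x = a then (1 : ℝ) else 0) - π|
          * |1 - s π + deriv s π * (1 - π)| := by
        rw [interventionInfluence, abs_mul, abs_mul]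
    _ ≤ 1 * 1 * (1 + K) := by
        gcongr
        exact abs_ite_one_neg_one_le _
    _ = 1 + K := by ring

variable {Ω : Type*}

theorem measurable_interventionScore {m : MeasurableSpace Ω} (hsM : Measurable s) (a b : Bool)
    {π : Bool → Ω → ℝ} (hπ : ∀ b, Measurable[m] (π b)) :
    Measurable[m] fun ω => interventionScore s a (fun b => π b ω) b := by
  have := hπ a
  have := hπ b
  unfold interventionScore
  fun_prop

theorem memLp_top_interventionScore [MeasurableSpace Ω] {μ : Measure Ω} (hsM : Measurable s)
    (hs : ∀ x ∈ Icc (0 : ℝ) 1, s x ∈ Icc (0 : ℝ) 1) (a b : Bool) {π : Bool → Ω → ℝ}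
    (hπ : ∀ b, Measurable (π b)) (hπ01 : ∀ b, ∀ᵐ ω ∂μ, π b ω ∈ Icc (0 : ℝ) 1) :
    MemLp (fun ω => interventionScore s a (fun b => π b ω) b) ∞ μ := by
  refine memLp_top_of_bound (measurable_interventionScore hsM a b hπ).aestronglyMeasurable 2 ?_
  filter_upwards [hπ01 a, hπ01 b] with ω ha hb using abs_interventionScore_le hs ha hb

theorem memLp_top_interventionScore_condExp {m m0 : MeasurableSpace Ω} {μ : Measure[m0] Ω}
    [IsFiniteMeasure μ] (hm : m ≤ m0) {A : Ω → Bool} (hA : Measurable[m0] A)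
    (hsM : Measurable s) (hs : ∀ x ∈ Icc (0 : ℝ) 1, s x ∈ Icc (0 : ℝ) 1) (a b : Bool) :
    MemLp (fun ω => interventionScore s a
      (fun b => (μ[fun ω => if A ω = b then (1 : ℝ) else 0 | m]) ω) b) ∞ μ :=
  memLp_top_interventionScore hsM hs a b
    (fun _ => (stronglyMeasurable_condExp.mono hm).measurable) fun b =>
    ae_condExp_mem_Icc (f := fun ω => if A ω = b then (1 : ℝ) else 0) hm
      (Measurable.ite (hA (measurableSet_singleton b)) measurable_const measurable_const
        |>.aestronglyMeasurable)
      (ae_of_all _ fun ω => by split_ifs <;> simp)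

theorem memLp_top_interventionInfluence [MeasurableSpace Ω] {μ : Measure Ω}
    (hsM : Measurable s)
    (hs : ∀ x ∈ Icc (0 : ℝ) 1, s x ∈ Icc (0 : ℝ) 1) {K : ℝ} (hs' : ∀ x, |deriv s x| ≤ K)
    (a b : Bool) {A : Ω → Bool} (hA : Measurable A) {π : Ω → ℝ} (hπ : Measurable π)
    (hπ01 : ∀ ω, π ω ∈ Icc (0 : ℝ) 1) :
    MemLp (fun ω => interventionInfluence s a b (A ω) (π ω)) ∞ μ := by
  have hi : Measurable fun ω => if A ω = a then (1 : ℝ) else 0 :=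
    Measurable.ite (hA (measurableSet_singleton a)) measurable_const measurable_const
  exact memLp_top_of_bound (by unfold interventionInfluence; fun_prop) (1 + K)
    (ae_of_all _ fun ω => abs_interventionInfluence_le hs hs' a b (A ω) (hπ01 ω))

end Intervention

/-- Times `1,…,T` of the paper are indexed by `0,…,T-1`, so the paper's `∏_{s=0}^{t-1} r̂_s`
(with `r̂_0 ≡ 1`) is the product over `Finset.range t`. -/
theorem forwards_in_time_Q_decomposition_general
    {Ω : Type*} [MeasurableSpace Ω] (μ : Measure Ω) [IsProbabilityMeasure μ]
    (T d : ℕ)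
    (X : ℕ → Ω → (Fin d → ℝ)) (A : ℕ → Ω → Bool)
    (hX : ∀ t, Measurable (X t)) (hA : ∀ t, Measurable (A t))
    (a : ℕ → Bool)
    (s : ℕ → ℝ → ℝ) (hs : ∀ t, ContDiff ℝ 2 (s t))
    (hsbdd : ∃ K, ∀ t x, |deriv (s t) x| ≤ K ∧ |deriv (deriv (s t)) x| ≤ K)
    (hs01 : ∀ t, ∀ x ∈ Set.Icc (0:ℝ) 1, s t x ∈ Set.Icc (0:ℝ) 1)
    (H : ℕ → MeasurableSpace Ω)
    (hH : H = fun t =>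
      (⨆ u ∈ Finset.range (t+1), MeasurableSpace.comap (X u) inferInstance)
        ⊔ (⨆ u ∈ Finset.range t, MeasurableSpace.comap (A u) inferInstance))
    (p : ℕ → Bool → Ω → ℝ)
    (hp : p = fun t b => μ[(fun ω => if A t ω = b then (1:ℝ) else 0) | H t])
    (Q : ℕ → Bool → Ω → ℝ)
    (hQ : Q = fun t b ω => p t b ω
      + (if b = a t then (1:ℝ) else -1) * s t (p t (a t) ω) * (1 - p t (a t) ω))
    (m : ℕ → Bool → Ω → ℝ)
    (hmmeas : ∀ t < T, ∀ b, Measurable[H t] (m t b))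
    (pihat : ℕ → Ω → ℝ)
    (hpihatmeas : ∀ t, Measurable[H t] (pihat t))
    (hpihat01 : ∀ t ω, pihat t ω ∈ Set.Ioo (0:ℝ) 1)
    (phatb : ℕ → Bool → Ω → ℝ)
    (hphatb : phatb = fun t b ω => if b then pihat t ω else 1 - pihat t ω)
    (Qhat : ℕ → Bool → Ω → ℝ)
    (hQhat : Qhat = fun t b ω => phatb t b ω
      + (if b = a t then (1:ℝ) else -1) * s t (phatb t (a t) ω) * (1 - phatb t (a t) ω))
    (rhat : ℕ → Ω → ℝ)
    (hrhat : rhat = fun t ω => Qhat t (A t ω) ω / phatb t (A t ω) ω)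
    (hrhatbdd : ∃ K, ∀ t, ∀ᵐ ω ∂μ, |rhat t ω| ≤ K)
    (mhat : ℕ → Bool → Ω → ℝ)
    (hmhatmeas : ∀ t < T, ∀ b, Measurable[H t] (mhat t b))
    (hbdd : ∃ C, ∀ t < T, ∀ b, (∀ᵐ ω ∂μ, |m t b ω| ≤ C) ∧ (∀ᵐ ω ∂μ, |mhat t b ω| ≤ C))
    (φth : ℕ → Bool → Ω → ℝ)
    (hφth : φth = fun t b ω => (if b = a t then (1:ℝ) else -1)
      * ((if A t ω = a t then (1:ℝ) else 0) - phatb t (a t) ω)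
      * (1 - s t (phatb t (a t) ω)
          + deriv (s t) (phatb t (a t) ω) * (1 - phatb t (a t) ω)))
    (φQh : Ω → ℝ)
    (hφQh : φQh = fun ω => ∑ t ∈ Finset.range T, (∏ u ∈ Finset.range t, rhat u ω)
      * ∑ b : Bool, mhat t b ω * φth t b ω) :
    ∫ ω, φQh ω ∂μ
      = (∑ t ∈ Finset.range T, ∫ ω, (∏ u ∈ Finset.range t, rhat u ω)
          * ∑ b : Bool, (mhat t b ω - m t b ω) * (μ[φth t b | H t]) ω ∂μ)
      + (∑ t ∈ Finset.range T, ∫ ω, (∏ u ∈ Finset.range t, rhat u ω)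
          * ∑ b : Bool, m t b ω
              * (Qhat t b ω - Q t b ω + (μ[φth t b | H t]) ω) ∂μ)
      + ∑ t ∈ Finset.range T, ∫ ω, (∏ u ∈ Finset.range t, rhat u ω)
          * ∑ b : Bool, m t b ω * (Q t b ω - Qhat t b ω) ∂μ := by
  obtain ⟨K, hK⟩ := hrhatbdd
  obtain ⟨C, hC⟩ := hbdd
  obtain ⟨Ks, hKs⟩ := hsbdd
  obtain rfl : H = history X A := hH
  have hHle : ∀ t, history X A t ≤ ‹MeasurableSpace Ω› := history_le X A hX hA
  have hLinf : ∀ {f : Ω → ℝ} {t : ℕ}, Measurable[history X A t] f → ∀ B : ℝ,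
      (∀ᵐ ω ∂μ, |f ω| ≤ B) → MemLp f ∞ μ := fun hf B hB =>
    memLp_top_of_bound (hf.mono (hHle _) le_rfl).aestronglyMeasurable B hB
  have hsM : ∀ t, Measurable (s t) := fun t => (hs t).continuous.measurable
  have hphatbM : ∀ t b, Measurable[history X A t] (phatb t b) := fun t b => by
    rw [hphatb]; exact measurable_ite_self_one_sub (hpihatmeas t) b
  have hphatb01 : ∀ t b ω, phatb t b ω ∈ Icc (0 : ℝ) 1 := fun t b ω => by
    rw [hphatb]; exact ite_self_one_sub_mem_Icc (Ioo_subset_Icc_self (hpihat01 t ω)) b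
  have hrhatM : ∀ u t, u < t → Measurable[history X A t] (rhat u) := fun u t hut => by
    rw [hrhat, hQhat]
    refine measurable_apply_of_countable (F := fun b ω => interventionScore (s u) (a u)
      (fun b => phatb u b ω) b / phatb u b ω) (fun b => ?_) (measurable_history_of_lt X A hut)
    exact ((measurable_interventionScore (hsM u) (a u) b (hphatbM u)).div (hphatbM u b)).mono
      (history_mono X A hut.le) le_rfl
  have hw : ∀ t, Measurable[history X A t] fun ω => ∏ u ∈ Finset.range t, rhat u ω := fun t =>
    Finset.measurable_prod _ fun u hu => hrhatM u t (Finset.mem_range.1 hu)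
  have hw' : ∀ t, MemLp (fun ω => ∏ u ∈ Finset.range t, rhat u ω) ∞ μ := fun t => by
    simpa using MemLp.prod' (s := Finset.range t) (p := fun _ => ∞) fun u _ =>
      hLinf (hrhatM u (u + 1) u.lt_succ_self) K (hK u)
  have hQ' : ∀ t b, MemLp (Q t b) ∞ μ := fun t b => by
    rw [hQ, hp]
    exact memLp_top_interventionScore_condExp (hHle t) (hA t) (hsM t) (hs01 t) (a t) b
  have hQhat' : ∀ t b, MemLp (Qhat t b) ∞ μ := fun t b => by
    rw [hQhat]
    exact memLp_top_interventionScore (hsM t) (hs01 t) (a t) b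
      (fun b => (hphatbM t b).mono (hHle t) le_rfl) fun b => ae_of_all _ (hphatb01 t b)
  have hφ' : ∀ t b, MemLp (φth t b) ∞ μ := fun t b => by
    rw [hφth]
    exact memLp_top_interventionInfluence (hsM t) (hs01 t) (fun x => (hKs t x).1) (a t) b
      (hA t) ((hphatbM t (a t)).mono (hHle t) le_rfl) (hphatb01 t (a t))
  have hmhat' : ∀ t < T, ∀ b, MemLp (mhat t b) ∞ μ := fun t ht b =>
    hLinf (hmhatmeas t ht b) C (hC t ht b).2
  have hint : ∀ t < T, Integrable
      (fun ω => (∏ u ∈ Finset.range t, rhat u ω) * ∑ b : Bool, mhat t b ω * φth t b ω) μ :=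
    fun t ht => ((memLp_finsetSum _ fun b _ => (hφ' t b).mul' (r := ∞) (hmhat' t ht b)).mul'
      (hw' t)).integrable le_top
  rw [hφQh, integral_finsetSum _ fun t ht => hint t (Finset.mem_range.1 ht),
    ← Finset.sum_add_distrib, ← Finset.sum_add_distrib]
  refine Finset.sum_congr rfl fun t ht => ?_
  have ht : t < T := Finset.mem_range.1 ht
  exact integral_mul_sum_mul_decomposition (hHle t) (hw t).stronglyMeasurable (hw' t)
    (fun b => (hmhatmeas t ht b).stronglyMeasurable) (hmhat' t ht)
    (fun b => hLinf (hmmeas t ht b) C (hC t ht b).1) (hQ' t) (hQhat' t) (hφ' t)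

/-- **Forwards-in-time error decomposition of the weight component
(Lemma forward-phi-error).**  Times `1,…,T` of the paper are indexed by `0,…,T-1`;
the paper's products `∏_{s=0}^{t-1} r̂_s` (with `r̂_0 ≡ 1`) correspond to products over
`Finset.range t`. -/
theorem forwards_in_time_Q_decomposition
    {Ω : Type*} [MeasurableSpace Ω] (μ : Measure Ω) [IsProbabilityMeasure μ]
    (T d : ℕ) (hT : 1 ≤ T)
    (X : ℕ → Ω → (Fin d → ℝ)) (A : ℕ → Ω → Bool) (Y : Ω → ℝ)
    (hX : ∀ t, Measurable (X t)) (hA : ∀ t, Measurable (A t))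
    (hY : MemLp Y 2 μ)
    (a : ℕ → Bool)
    (s : ℕ → ℝ → ℝ) (hs : ∀ t, ContDiff ℝ 2 (s t))
    (hsbdd : ∃ K, ∀ t x, |deriv (s t) x| ≤ K ∧ |deriv (deriv (s t)) x| ≤ K)
    (hs01 : ∀ t, ∀ x ∈ Set.Icc (0:ℝ) 1, s t x ∈ Set.Icc (0:ℝ) 1)
    (H : ℕ → MeasurableSpace Ω)
    (hH : H = fun t =>
      (⨆ u ∈ Finset.range (t+1), MeasurableSpace.comap (X u) inferInstance)
        ⊔ (⨆ u ∈ Finset.range t, MeasurableSpace.comap (A u) inferInstance))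
    (p : ℕ → Bool → Ω → ℝ)
    (hp : p = fun t b => μ[(fun ω => if A t ω = b then (1:ℝ) else 0) | H t])
    (Q : ℕ → Bool → Ω → ℝ)
    (hQ : Q = fun t b ω => p t b ω
      + (if b = a t then (1:ℝ) else -1) * s t (p t (a t) ω) * (1 - p t (a t) ω))
    (r : ℕ → Ω → ℝ)
    (hr : r = fun t ω => Q t (A t ω) ω / p t (A t ω) ω)
    (hrbdd : ∃ K, ∀ t, ∀ᵐ ω ∂μ, |r t ω| ≤ K)
    (m : ℕ → Bool → Ω → ℝ)
    (hmmeas : ∀ t < T, ∀ b, Measurable[H t] (m t b))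
    (hmlast : (fun ω => m (T-1) (A (T-1) ω) ω)
      =ᵐ[μ] μ[Y | H (T-1) ⊔ MeasurableSpace.comap (A (T-1)) inferInstance])
    (hmrec : ∀ t, t + 1 < T →
      (fun ω => m t (A t ω) ω)
        =ᵐ[μ] μ[(fun ω => ∑ b : Bool, m (t+1) b ω * Q (t+1) b ω) |
            H t ⊔ MeasurableSpace.comap (A t) inferInstance])
    (m0 : ℝ) (hm0 : m0 = ∫ ω, ∑ b : Bool, m 0 b ω * Q 0 b ω ∂μ)
    (pihat : ℕ → Ω → ℝ)
    (hpihatmeas : ∀ t, Measurable[H t] (pihat t))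
    (hpihat01 : ∀ t ω, pihat t ω ∈ Set.Ioo (0:ℝ) 1)
    (phatb : ℕ → Bool → Ω → ℝ)
    (hphatb : phatb = fun t b ω => if b then pihat t ω else 1 - pihat t ω)
    (Qhat : ℕ → Bool → Ω → ℝ)
    (hQhat : Qhat = fun t b ω => phatb t b ω
      + (if b = a t then (1:ℝ) else -1) * s t (phatb t (a t) ω) * (1 - phatb t (a t) ω))
    (rhat : ℕ → Ω → ℝ)
    (hrhat : rhat = fun t ω => Qhat t (A t ω) ω / phatb t (A t ω) ω)
    (hrhatbdd : ∃ K, ∀ t, ∀ᵐ ω ∂μ, |rhat t ω| ≤ K)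
    (mhat : ℕ → Bool → Ω → ℝ)
    (hmhatmeas : ∀ t < T, ∀ b, Measurable[H t] (mhat t b))
    (hbdd : ∃ C, ∀ t < T, ∀ b, (∀ᵐ ω ∂μ, |m t b ω| ≤ C) ∧ (∀ᵐ ω ∂μ, |mhat t b ω| ≤ C))
    (φth : ℕ → Bool → Ω → ℝ)
    (hφth : φth = fun t b ω => (if b = a t then (1:ℝ) else -1)
      * ((if A t ω = a t then (1:ℝ) else 0) - phatb t (a t) ω)
      * (1 - s t (phatb t (a t) ω)
          + deriv (s t) (phatb t (a t) ω) * (1 - phatb t (a t) ω)))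
    (φQh : Ω → ℝ)
    (hφQh : φQh = fun ω => ∑ t ∈ Finset.range T, (∏ u ∈ Finset.range t, rhat u ω)
      * ∑ b : Bool, mhat t b ω * φth t b ω) :
    ∫ ω, φQh ω ∂μ
      = (∑ t ∈ Finset.range T, ∫ ω, (∏ u ∈ Finset.range t, rhat u ω)
          * ∑ b : Bool, (mhat t b ω - m t b ω) * (μ[φth t b | H t]) ω ∂μ)
      + (∑ t ∈ Finset.range T, ∫ ω, (∏ u ∈ Finset.range t, rhat u ω)
          * ∑ b : Bool, m t b ω
              * (Qhat t b ω - Q t b ω + (μ[φth t b | H t]) ω) ∂μ)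
      + ∑ t ∈ Finset.range T, ∫ ω, (∏ u ∈ Finset.range t, rhat u ω)
          * ∑ b : Bool, m t b ω * (Q t b ω - Qhat t b ω) ∂μ :=
  forwards_in_time_Q_decomposition_general μ T d X A hX hA a s hs hsbdd hs01 H hH p hp Q hQ m hmmeas
    pihat hpihatmeas hpihat01 phatb hphatb Qhat hQhat rhat hrhat hrhatbdd mhat hmhatmeas hbdd φth
    hφth φQh hφQh
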